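/- Let n ≥ 2 and 1 ≤ l ≤ n-1, and consider the transition law ζ₀ = u^{-n} ζ₁ + t_l u^{-l} with t_l ≠ 0. Then the new fiber coordinates ζ̃₀ = (u^l ζ₀ - t_l)/(t_l ζ₀) and ζ̃₁ = ζ₁/(t_l v^{n-l} ζ₁ + t_l²), where v = 1/u, satisfy the relation ζ̃₀ = v^{n-2l} ζ̃₁ on the overlap where both are defined. -/

import Mathlib

/-! Write `n = l + m` and `w = ζ₁ + t u^m`, so that the gluing law reads `ζ₀ = w / u^n`.
Clearing powers of `u` from numerators and denominators, both `ζ̃₀` and `v^{m-l} ζ̃₁` reduce to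
the single expression `u^l ζ₁ / (t w)`. -/

section
variable {K : Type*} [Field K] {u : K}

theorem newFiberCoord₀_eq (hu : u ≠ 0) (l m : ℕ) (t ζ₁ : K) :
    (u ^ l * (ζ₁ / u ^ (l + m) + t / u ^ l) - t) / (t * (ζ₁ / u ^ (l + m) + t / u ^ l))
      = u ^ l * ζ₁ / (t * (ζ₁ + t * u ^ m)) := by
  have hnum : u ^ l * (ζ₁ / u ^ (l + m) + t / u ^ l) - t = u ^ l * ζ₁ / u ^ (l + m) := by
    field_simp; ring
  have hden : t * (ζ₁ / u ^ (l + m) + t / u ^ l) = t * (ζ₁ + t * u ^ m) / u ^ (l + m) := by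
    field_simp; ring
  rw [hnum, hden, div_div_div_cancel_right₀ (pow_ne_zero _ hu)]

theorem newFiberCoord₁_eq (hu : u ≠ 0) (l m : ℕ) (t ζ₁ : K) :
    u⁻¹ ^ ((m : ℤ) - l) * (ζ₁ / (t * u⁻¹ ^ m * ζ₁ + t ^ 2))
      = u ^ l * ζ₁ / (t * (ζ₁ + t * u ^ m)) := by
  have hden : t * u⁻¹ ^ m * ζ₁ + t ^ 2 = t * (ζ₁ + t * u ^ m) / u ^ m := by
    rw [inv_pow]; field_simp
  rw [hden, div_div_eq_mul_div, zpow_sub₀ (inv_ne_zero hu), zpow_natCast, zpow_natCast,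
    inv_pow, inv_pow]
  field_simp

end

theorem stmt_1_general (n l : ℕ) (hln : l ≤ n - 1)
    (t : ℂ) (u ζ₀ ζ₁ : ℂ) (hu : u ≠ 0)
    (hglue : ζ₀ = ζ₁ / u ^ n + t / u ^ l) :
    (u ^ l * ζ₀ - t) / (t * ζ₀)
      = u⁻¹ ^ ((n : ℤ) - 2 * l) * (ζ₁ / (t * u⁻¹ ^ (n - l) * ζ₁ + t ^ 2)) := by
  obtain ⟨m, rfl⟩ : ∃ m, n = l + m := ⟨n - l, by omega⟩
  have hexp : ((l + m : ℕ) : ℤ) - 2 * l = m - l := by push_cast; ring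
  rw [hglue, newFiberCoord₀_eq hu, Nat.add_sub_cancel_left, hexp, newFiberCoord₁_eq hu]

/-- For n ≥ 2, 1 ≤ l ≤ n-1, t_l ≠ 0, and the transition law
ζ₀ = u^{-n} ζ₁ + t_l u^{-l}, the new fiber coordinates
ζ̃₀ = (u^l ζ₀ - t_l)/(t_l ζ₀) and ζ̃₁ = ζ₁/(t_l v^{n-l} ζ₁ + t_l²), with v = 1/u,
satisfy ζ̃₀ = v^{n-2l} ζ̃₁ wherever both are defined (v^{n-2l} taken as an integer power,
allowing n - 2l < 0). -/
theorem stmt_1 (n l : ℕ) (hn : 2 ≤ n) (hl : 1 ≤ l) (hln : l ≤ n - 1)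
    (t : ℂ) (ht : t ≠ 0) (u ζ₀ ζ₁ : ℂ) (hu : u ≠ 0)
    (hglue : ζ₀ = ζ₁ / u ^ n + t / u ^ l)
    (hζ₀ : ζ₀ ≠ 0)
    (hden : t * u⁻¹ ^ (n - l) * ζ₁ + t ^ 2 ≠ 0) :
    (u ^ l * ζ₀ - t) / (t * ζ₀)
      = u⁻¹ ^ ((n : ℤ) - 2 * l) * (ζ₁ / (t * u⁻¹ ^ (n - l) * ζ₁ + t ^ 2)) :=
  stmt_1_general n l hln t u ζ₀ ζ₁ hu hglue
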